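/- arXiv:2302.14446 — 2 statements merged into one kernel-verified Lean document; each statement's English description precedes it below -/
import Mathlib

section
/- Mean field limit of bounded RKHS sequences: if f_M ∈ H_M with ‖f_M‖_{H_M} ≤ B for all M, where the kernels k^{[M]} satisfy permutation-invariance, uniform boundedness and uniform continuity w.r.t. empirical measures, then there exists a subsequence (f_{M_ℓ}) and a continuous function f : 𝒫(X) → ℝ such that sup_{x ∈ X^{M_ℓ}} |f_{M_ℓ}(x) − f(μ̂[x])| → 0 as ℓ → ∞. -/
open MeasureTheory ENNReal

/-- Kantorovich–Rubinstein (Wasserstein-1 dual) distance between two measures. -/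
noncomputable def dKR {X : Type*} [MeasurableSpace X] [MetricSpace X]
    (μ ν : Measure X) : ℝ :=
  sSup {r : ℝ | ∃ φ : X → ℝ, LipschitzWith 1 φ ∧
    r = ∫ x, φ x ∂μ - ∫ x, φ x ∂ν}

/-- Empirical measure of a tuple. -/
noncomputable def emp {X : Type*} [MeasurableSpace X] {M : ℕ} (x : Fin M → X) :
    Measure X :=
  ((M : ℝ≥0∞))⁻¹ • ∑ i, Measure.dirac (x i)

/-- Empirical measure as a probability measure. -/
noncomputable def empP {X : Type*} [MeasurableSpace X] {M : ℕ} (x : Fin (M + 1) → X) :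
    ProbabilityMeasure X :=
  ⟨emp x, by
    constructor
    simp only [emp, Measure.smul_apply, Measure.finset_sum_apply,
      Measure.dirac_apply' _ MeasurableSet.univ, Set.indicator_univ, smul_eq_mul]
    simp only [Pi.one_apply, Finset.sum_const, Finset.card_univ, Fintype.card_fin,
      nsmul_eq_mul, mul_one]
    rw [ENNReal.inv_mul_cancel] <;> simp⟩

/-!
Put `g_M x = ⟪f_M, K_M x⟫`. It is bounded by `B √C_k`, and the kernel modulus gives
`|g_M x - g_M y| ≤ ρ (d_KR(μ̂[x], μ̂[y]))` with `ρ t = B √(2 ω t)`. The inf-convolution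
`h_M μ = inf_x (g_M x + ρ (d_KR(μ, μ̂[x])))` extends `g_M` from the empirical measures to all of
`𝒫(X)`, and the family `(h_M)` is uniformly bounded and equicontinuous for the weak topology:
weak neighbourhoods are `d_KR`-small, because the 1-Lipschitz functions vanishing at a point form
a totally bounded subset of `C(X)`. As `𝒫(X)` is compact, Arzelà–Ascoli gives a uniformly
convergent subsequence of `(h_M)`, and its limit is `F`.
-/

open Set Filter Topology BoundedContinuousFunction

section KantorovichRubinstein

variable {X : Type*} [MetricSpace X]

def normalizedLipschitz (x₀ : X) : Set (X →ᵇ ℝ) := {ψ | LipschitzWith 1 ψ ∧ ψ x₀ = 0}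

theorem norm_le_diam_of_mem_normalizedLipschitz [CompactSpace X] {x₀ : X} {ψ : X →ᵇ ℝ}
    (hψ : ψ ∈ normalizedLipschitz x₀) : ‖ψ‖ ≤ Metric.diam (univ : Set X) := by
  refine (norm_le Metric.diam_nonneg).2 fun x => ?_
  calc ‖ψ x‖ = dist (ψ x) (ψ x₀) := by rw [hψ.2, dist_zero_right]
    _ ≤ dist x x₀ := by simpa using hψ.1.dist_le_mul x x₀
    _ ≤ _ := Metric.dist_le_diam_of_mem isCompact_univ.isBounded (mem_univ x) (mem_univ x₀)

theorem totallyBounded_normalizedLipschitz [CompactSpace X] (x₀ : X) :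
    TotallyBounded (normalizedLipschitz x₀) := by
  set D := Metric.diam (univ : Set X)
  refine (arzela_ascoli (Icc (-D) D) isCompact_Icc _ (fun ψ x hψ => ?_) ?_).totallyBounded.subset
    subset_closure
  · exact abs_le.1 ((norm_le_diam_of_mem_normalizedLipschitz hψ).trans' (ψ.norm_coe_le_norm x))
  · exact (LipschitzWith.uniformEquicontinuous _ 1 fun ψ => ψ.2.1).equicontinuous

variable [MeasurableSpace X]

theorem dKR_le_of_forall {μ ν : Measure X} {c : ℝ}
    (h : ∀ φ : X → ℝ, LipschitzWith 1 φ → ∫ x, φ x ∂μ - ∫ x, φ x ∂ν ≤ c) : dKR μ ν ≤ c := by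
  refine Real.sSup_le ?_ (by simpa using h 0 (LipschitzWith.const' 0))
  rintro _ ⟨φ, hφ, rfl⟩
  exact h φ hφ

theorem dKR_self (μ : Measure X) : dKR μ μ = 0 := by
  refine le_antisymm (dKR_le_of_forall fun _ _ => (sub_self _).le) (le_csSup ⟨0, ?_⟩ ?_)
  · rintro _ ⟨φ, -, rfl⟩
    exact (sub_self _).le
  · exact ⟨0, LipschitzWith.const' 0, by simp⟩

theorem dKR_comm (μ ν : Measure X) : dKR μ ν = dKR ν μ := by
  suffices h : ∀ μ ν : Measure X, {r : ℝ | ∃ φ : X → ℝ, LipschitzWith 1 φ ∧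
      r = ∫ x, φ x ∂μ - ∫ x, φ x ∂ν} ⊆ {r : ℝ | ∃ φ : X → ℝ, LipschitzWith 1 φ ∧
      r = ∫ x, φ x ∂ν - ∫ x, φ x ∂μ} from congrArg sSup ((h μ ν).antisymm (h ν μ))
  rintro μ ν _ ⟨φ, hφ, rfl⟩
  exact ⟨-φ, hφ.neg, by simp [integral_neg]; ring⟩

variable [CompactSpace X] [OpensMeasurableSpace X]

theorem exists_normalizedLipschitz_integral_sub_eq (x₀ : X) {φ : X → ℝ}
    (hφ : LipschitzWith 1 φ) :
    ∃ ψ ∈ normalizedLipschitz x₀, ∀ μ ν : ProbabilityMeasure X,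
      ∫ x, φ x ∂(μ : Measure X) - ∫ x, φ x ∂(ν : Measure X) =
        ∫ x, ψ x ∂(μ : Measure X) - ∫ x, ψ x ∂(ν : Measure X) := by
  have hψ : LipschitzWith 1 fun x => φ x - φ x₀ :=
    .of_dist_le_mul fun x y => by simpa [dist_sub_right] using hφ.dist_le_mul x y
  refine ⟨mkOfCompact ⟨_, hψ.continuous⟩, ⟨hψ, sub_self _⟩, fun μ ν => ?_⟩
  have hint : ∀ ξ : ProbabilityMeasure X, Integrable φ (ξ : Measure X) :=
    fun ξ => (mkOfCompact ⟨φ, hφ.continuous⟩).integrable _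
  simp [integral_sub (hint μ) (integrable_const _), integral_sub (hint ν) (integrable_const _)]

theorem integral_sub_integral_le_two_diam {φ : X → ℝ} (hφ : LipschitzWith 1 φ)
    (μ ν : ProbabilityMeasure X) :
    ∫ x, φ x ∂(μ : Measure X) - ∫ x, φ x ∂(ν : Measure X) ≤ 2 * Metric.diam (univ : Set X) := by
  have : Nonempty X := nonempty_of_isProbabilityMeasure (μ : Measure X)
  obtain ⟨ψ, hψ, heq⟩ := exists_normalizedLipschitz_integral_sub_eq (Classical.arbitrary X) hφ
  rw [heq μ ν]
  calc _ ≤ ‖∫ x, ψ x ∂(μ : Measure X)‖ + ‖∫ x, ψ x ∂(ν : Measure X)‖ :=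
        (Real.le_norm_self _).trans (norm_sub_le _ _)
    _ ≤ ‖ψ‖ + ‖ψ‖ := add_le_add (ψ.norm_integral_le_norm _) (ψ.norm_integral_le_norm _)
    _ ≤ _ := by linarith [norm_le_diam_of_mem_normalizedLipschitz hψ]

theorem le_dKR {φ : X → ℝ} (hφ : LipschitzWith 1 φ) (μ ν : ProbabilityMeasure X) :
    ∫ x, φ x ∂(μ : Measure X) - ∫ x, φ x ∂(ν : Measure X) ≤ dKR (μ : Measure X) ν := by
  refine le_csSup ⟨2 * Metric.diam (univ : Set X), ?_⟩ ⟨φ, hφ, rfl⟩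
  rintro _ ⟨φ', hφ', rfl⟩
  exact integral_sub_integral_le_two_diam hφ' μ ν

theorem dKR_nonneg (μ ν : ProbabilityMeasure X) : 0 ≤ dKR (μ : Measure X) ν := by
  simpa using le_dKR (LipschitzWith.const' (0 : ℝ)) μ ν

theorem dKR_le_two_diam (μ ν : ProbabilityMeasure X) :
    dKR (μ : Measure X) ν ≤ 2 * Metric.diam (univ : Set X) :=
  dKR_le_of_forall fun _ hφ => integral_sub_integral_le_two_diam hφ μ ν

theorem dKR_triangle (μ ν ξ : ProbabilityMeasure X) :
    dKR (μ : Measure X) ν ≤ dKR (μ : Measure X) ξ + dKR (ξ : Measure X) ν :=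
  dKR_le_of_forall fun _ hφ => by linarith [le_dKR hφ μ ξ, le_dKR hφ ξ ν]

theorem abs_dKR_sub_dKR_le (μ ν ξ : ProbabilityMeasure X) :
    |dKR (μ : Measure X) ξ - dKR (ν : Measure X) ξ| ≤ dKR (μ : Measure X) ν := by
  rw [abs_sub_le_iff]
  constructor
  · linarith [dKR_triangle μ ξ ν]
  · linarith [dKR_triangle ν ξ μ, dKR_comm (μ : Measure X) ν]

theorem eventually_dKR_lt (μ₀ : ProbabilityMeasure X) {ε : ℝ} (hε : 0 < ε) :
    ∀ᶠ ν : ProbabilityMeasure X in 𝓝 μ₀, dKR (ν : Measure X) μ₀ < ε := by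
  have : Nonempty X := nonempty_of_isProbabilityMeasure (μ₀ : Measure X)
  set x₀ := Classical.arbitrary X
  obtain ⟨t, htfin, hcover⟩ :=
    Metric.totallyBounded_iff.1 (totallyBounded_normalizedLipschitz x₀) (ε / 4) (by positivity)
  have hnear : ∀ᶠ ν : ProbabilityMeasure X in 𝓝 μ₀, ∀ χ ∈ t,
      dist (∫ x, χ x ∂(ν : Measure X)) (∫ x, χ x ∂(μ₀ : Measure X)) < ε / 4 :=
    htfin.eventually_all.2 fun χ _ => Metric.tendsto_nhds.1
      ((ProbabilityMeasure.continuous_integral_boundedContinuousFunction χ).tendsto μ₀) _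
      (by positivity)
  filter_upwards [hnear] with ν hν
  refine (dKR_le_of_forall fun φ hφ => ?_).trans_lt (by linarith : 3 * (ε / 4) < ε)
  obtain ⟨ψ, hψ, heq⟩ := exists_normalizedLipschitz_integral_sub_eq x₀ hφ
  obtain ⟨χ, hχt, hψχ⟩ := mem_iUnion₂.1 (hcover hψ)
  have hψχ' : ∀ ξ : ProbabilityMeasure X,
      |∫ x, ψ x ∂(ξ : Measure X) - ∫ x, χ x ∂(ξ : Measure X)| < ε / 4 := fun ξ => by
    rw [← integral_sub (ψ.integrable _) (χ.integrable _)]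
    exact ((ψ - χ).norm_integral_le_norm _).trans_lt (dist_eq_norm ψ χ ▸ hψχ)
  have hχ := hν χ hχt
  rw [Real.dist_eq] at hχ
  rw [heq ν μ₀]
  linarith [(abs_lt.1 (hψχ' ν)).2, (abs_lt.1 (hψχ' μ₀)).1, (abs_lt.1 hχ).2]

end KantorovichRubinstein

section InfConvolution

variable {X : Type*} [MetricSpace X] [MeasurableSpace X]

noncomputable def infConv {ι : Type*} (e : ι → ProbabilityMeasure X) (g : ι → ℝ) (ρ : ℝ → ℝ)
    (μ : ProbabilityMeasure X) : ℝ :=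
  ⨅ i, g i + ρ (dKR (μ : Measure X) (e i))

section

variable {ι : Type*} {e : ι → ProbabilityMeasure X} {g : ι → ℝ} {ρ : ℝ → ℝ}

theorem infConv_le (hg : BddBelow (range g)) (hρ : ∀ t, 0 ≤ ρ t) (μ : ProbabilityMeasure X)
    (i : ι) : infConv e g ρ μ ≤ g i + ρ (dKR (μ : Measure X) (e i)) := by
  refine ciInf_le ⟨hg.some, ?_⟩ i
  rintro _ ⟨j, rfl⟩
  linarith [hg.some_mem ⟨j, rfl⟩, hρ (dKR (μ : Measure X) (e j))]

theorem infConv_apply_self (hg : ∀ i j, g i ≤ g j + ρ (dKR (e i : Measure X) (e j)))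
    (hρ : ρ 0 = 0) (i : ι) : infConv e g ρ (e i) = g i := by
  refine IsLeast.csInf_eq ⟨⟨i, by simp [dKR_self, hρ]⟩, ?_⟩
  rintro _ ⟨j, rfl⟩
  exact hg i j

theorem infConv_le_infConv_add [Nonempty ι] (hg : BddBelow (range g)) (hρ : ∀ t, 0 ≤ ρ t)
    {μ ν : ProbabilityMeasure X} {ε : ℝ}
    (h : ∀ i, ρ (dKR (μ : Measure X) (e i)) ≤ ρ (dKR (ν : Measure X) (e i)) + ε) :
    infConv e g ρ μ ≤ infConv e g ρ ν + ε := by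
  rw [← sub_le_iff_le_add]
  refine le_ciInf fun i => ?_
  linarith [infConv_le (e := e) hg hρ μ i, h i]

theorem abs_infConv_le [CompactSpace X] [OpensMeasurableSpace X] [Nonempty ι] {C : ℝ}
    (hg : ∀ i, |g i| ≤ C) (hρ : ∀ t, 0 ≤ ρ t) (hρ_mono : Monotone ρ) (μ : ProbabilityMeasure X) :
    |infConv e g ρ μ| ≤ C + ρ (2 * Metric.diam (univ : Set X)) := by
  obtain ⟨i⟩ := ‹Nonempty ι›
  have hbdd : BddBelow (range g) :=
    ⟨-C, by rintro _ ⟨j, rfl⟩; linarith [neg_abs_le (g j), hg j]⟩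
  have hlower : -C ≤ infConv e g ρ μ :=
    le_ciInf fun j => by linarith [neg_abs_le (g j), hg j, hρ (dKR (μ : Measure X) (e j))]
  rw [abs_le]
  constructor
  · linarith [hρ (2 * Metric.diam (univ : Set X))]
  · linarith [infConv_le (e := e) hbdd hρ μ i, le_abs_self (g i), hg i,
      hρ_mono (dKR_le_two_diam μ (e i))]

end

theorem equicontinuous_infConv [CompactSpace X] [OpensMeasurableSpace X] {N : Type*}
    {ι : N → Type*} [∀ n, Nonempty (ι n)] (e : ∀ n, ι n → ProbabilityMeasure X)
    (g : ∀ n, ι n → ℝ) (hg : ∀ n, BddBelow (range (g n))) {ρ : ℝ → ℝ} (hρ_cont : Continuous ρ)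
    (hρ : ∀ t, 0 ≤ ρ t) : Equicontinuous fun n => infConv (e n) (g n) ρ := by
  intro μ₀
  rw [Metric.equicontinuousAt_iff_right]
  intro ε hε
  set I := Icc (0 : ℝ) (2 * Metric.diam (univ : Set X))
  obtain ⟨δ, hδ, hρδ⟩ := Metric.uniformContinuousOn_iff.1
    (isCompact_Icc.uniformContinuousOn_of_continuous hρ_cont.continuousOn) (ε / 2) (by positivity)
  have hmem : ∀ μ ν : ProbabilityMeasure X, dKR (μ : Measure X) ν ∈ I :=
    fun μ ν => ⟨dKR_nonneg μ ν, dKR_le_two_diam μ ν⟩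
  filter_upwards [eventually_dKR_lt μ₀ hδ] with ν hν n
  have hclose : ∀ i,
      |ρ (dKR (μ₀ : Measure X) (e n i)) - ρ (dKR (ν : Measure X) (e n i))| < ε / 2 :=
    fun i => hρδ _ (hmem _ _) _ (hmem _ _) <| by
      rw [Real.dist_eq, abs_sub_comm]
      exact (abs_dKR_sub_dKR_le ν μ₀ (e n i)).trans_lt hν
  have h₁ : infConv (e n) (g n) ρ μ₀ ≤ infConv (e n) (g n) ρ ν + ε / 2 :=
    infConv_le_infConv_add (hg n) hρ fun i => by linarith [(abs_lt.1 (hclose i)).2]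
  have h₂ : infConv (e n) (g n) ρ ν ≤ infConv (e n) (g n) ρ μ₀ + ε / 2 :=
    infConv_le_infConv_add (hg n) hρ fun i => by linarith [(abs_lt.1 (hclose i)).1]
  rw [Real.dist_eq, abs_lt]
  constructor <;> linarith

end InfConvolution

theorem exists_subseq_tendstoUniformly_of_equicontinuous {P : Type*} [TopologicalSpace P]
    [CompactSpace P] {h : ℕ → P → ℝ} {C : ℝ} (hC : ∀ n p, |h n p| ≤ C)
    (heq : Equicontinuous h) :
    ∃ φ : ℕ → ℕ, StrictMono φ ∧ ∃ F : P → ℝ, Continuous F ∧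
      TendstoUniformly (fun ℓ => h (φ ℓ)) F atTop := by
  let hb : ℕ → P →ᵇ ℝ := fun n => mkOfCompact ⟨h n, heq.continuous n⟩
  have hcompact : IsCompact (closure (range hb)) := by
    refine arzela_ascoli (Icc (-C) C) isCompact_Icc _ ?_ ?_
    · rintro _ p ⟨n, rfl⟩
      exact abs_le.1 (hC n p)
    · intro p U hU
      filter_upwards [heq p U hU] with x hx
      rintro ⟨_, n, rfl⟩
      exact hx n
  obtain ⟨F, -, φ, hφ, hlim⟩ := hcompact.tendsto_subseq fun n => subset_closure ⟨n, rfl⟩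
  exact ⟨φ, hφ, F, F.continuous, tendsto_iff_tendstoUniformly.1 hlim⟩

theorem tendsto_iSup_abs_sub_of_tendstoUniformly {P : Type*} {ι : ℕ → Type*} {h : ℕ → P → ℝ}
    {F : P → ℝ} (hu : TendstoUniformly h F atTop) (e : ∀ n, ι n → P) :
    Tendsto (fun n => ⨆ i, |h n (e n i) - F (e n i)|) atTop (𝓝 0) := by
  rw [Metric.tendsto_atTop]
  intro ε hε
  obtain ⟨N, hN⟩ := eventually_atTop.1 (Metric.tendstoUniformly_iff.1 hu (ε / 2) (by positivity))
  refine ⟨N, fun n hn => ?_⟩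
  have hsup : ⨆ i, |h n (e n i) - F (e n i)| ≤ ε / 2 :=
    Real.iSup_le (fun i => by rw [abs_sub_comm, ← Real.dist_eq]; exact (hN n hn _).le)
      (by positivity)
  rw [Real.dist_eq, sub_zero, abs_of_nonneg (Real.iSup_nonneg fun _ => abs_nonneg _)]
  linarith

section FeatureMap

variable {α H : Type*} [NormedAddCommGroup H] [InnerProductSpace ℝ H] {k : α → α → ℝ} {K : α → H}
  {f : H} {B : ℝ}

theorem norm_sq_eq_of_feature (hk : ∀ x y, k x y = inner ℝ (K y) (K x)) (x : α) :
    ‖K x‖ ^ 2 = k x x := by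
  rw [hk, real_inner_self_eq_norm_sq]

theorem abs_inner_feature_le (hk : ∀ x y, k x y = inner ℝ (K y) (K x)) {C : ℝ}
    (hC : ∀ x, k x x ≤ C) (hf : ‖f‖ ≤ B) (x : α) : |inner ℝ f (K x)| ≤ B * √C :=
  (abs_real_inner_le_norm f (K x)).trans <| mul_le_mul hf
    (Real.le_sqrt_of_sq_le (norm_sq_eq_of_feature hk x ▸ hC x)) (norm_nonneg _)
    ((norm_nonneg f).trans hf)

theorem abs_inner_feature_sub_le (hk : ∀ x y, k x y = inner ℝ (K y) (K x)) {x y : α} {w : ℝ}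
    (hx : k x x - k y x ≤ w) (hy : k y y - k y x ≤ w) (hf : ‖f‖ ≤ B) :
    |inner ℝ f (K x) - inner ℝ f (K y)| ≤ B * √(2 * w) := by
  have hsq : ‖K x - K y‖ ^ 2 ≤ 2 * w := by
    rw [norm_sub_sq_real, norm_sq_eq_of_feature hk, norm_sq_eq_of_feature hk, ← hk]
    linarith
  rw [← inner_sub_right]
  exact (abs_real_inner_le_norm _ _).trans <| mul_le_mul hf (Real.le_sqrt_of_sq_le hsq)
    (norm_nonneg _) ((norm_nonneg f).trans hf)

theorem abs_inner_feature_sub_le_of_modulus (hk : ∀ x y, k x y = inner ℝ (K y) (K x))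
    {d : α → α → ℝ} (hd_self : ∀ x, d x x = 0) (hd_comm : ∀ x y, d x y = d y x) {ω : ℝ → ℝ}
    (hω : ∀ x₁ x₂ x₁' x₂', |k x₁ x₁' - k x₂ x₂'| ≤ ω (d x₁ x₂ + d x₁' x₂')) (hf : ‖f‖ ≤ B)
    (x y : α) : |inner ℝ f (K x) - inner ℝ f (K y)| ≤ B * √(2 * ω (d x y)) := by
  refine abs_inner_feature_sub_le hk ((le_abs_self _).trans ?_) ((le_abs_self _).trans ?_) hf
  · simpa [hd_self] using hω x y x x
  · simpa [hd_self, hd_comm y x] using hω y y y x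

end FeatureMap

theorem mean_field_limit_of_bounded_rkhs_sequences_general
    {X : Type*} [MetricSpace X] [CompactSpace X] [MeasurableSpace X] [BorelSpace X]
    (H : ℕ → Type*) [∀ M, NormedAddCommGroup (H M)] [∀ M, InnerProductSpace ℝ (H M)]
    (k : ∀ M : ℕ, (Fin (M + 1) → X) → (Fin (M + 1) → X) → ℝ)
    (K : ∀ M : ℕ, (Fin (M + 1) → X) → H M)
    (hrepr : ∀ (M : ℕ) (x x' : Fin (M + 1) → X), k M x x' = (inner ℝ (K M x') (K M x) : ℝ))
    (Ck : ℝ) (hbdd : ∀ (M : ℕ) (x x' : Fin (M + 1) → X), |k M x x'| ≤ Ck)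
    (ω : ℝ → ℝ) (hcont : Continuous ω) (hmono : Monotone ω) (hzero : ω 0 = 0)
    (hucont : ∀ (M : ℕ) (x₁ x₂ x₁' x₂' : Fin (M + 1) → X),
      |k M x₁ x₁' - k M x₂ x₂'| ≤ ω (dKR (emp x₁) (emp x₂) + dKR (emp x₁') (emp x₂')))
    (f : ∀ M, H M) (B : ℝ) (hB : ∀ M, ‖f M‖ ≤ B) :
    ∃ φ : ℕ → ℕ, StrictMono φ ∧
      ∃ F : ProbabilityMeasure X → ℝ, Continuous F ∧
        Filter.Tendsto (fun ℓ => ⨆ x : Fin (φ ℓ + 1) → X,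
          |(inner ℝ (f (φ ℓ)) (K (φ ℓ) x) : ℝ) - F (empP x)|) Filter.atTop (nhds 0) := by
  rcases isEmpty_or_nonempty X with hX | hX
  · exact ⟨id, strictMono_id, 0, continuous_const, by simp [Real.iSup_of_isEmpty]⟩
  have hB0 : 0 ≤ B := (norm_nonneg _).trans (hB 0)
  set g : ∀ M, (Fin (M + 1) → X) → ℝ := fun M x => inner ℝ (f M) (K M x)
  set ρ : ℝ → ℝ := fun t => B * √(2 * ω t)
  have hρ : ∀ t, 0 ≤ ρ t := fun t => mul_nonneg hB0 (Real.sqrt_nonneg _)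
  have hρ_mono : Monotone ρ := fun s t hst =>
    mul_le_mul_of_nonneg_left (Real.sqrt_le_sqrt (by linarith [hmono hst])) hB0
  have hg : ∀ M x, |g M x| ≤ B * √Ck :=
    fun M => abs_inner_feature_le (hrepr M) (fun x => (le_abs_self _).trans (hbdd M x x)) (hB M)
  have hg_mod : ∀ M x y, g M x ≤ g M y + ρ (dKR (empP x : Measure X) (empP y)) :=
    fun M x y => sub_le_iff_le_add'.1 <| (le_abs_self _).trans <|
      abs_inner_feature_sub_le_of_modulus (hrepr M) (fun x => dKR_self (emp x))
        (fun x y => dKR_comm (emp x) (emp y)) (hucont M) (hB M) x y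
  obtain ⟨φ, hφ, F, hF, hu⟩ := exists_subseq_tendstoUniformly_of_equicontinuous
    (fun M μ => abs_infConv_le (e := empP) (hg M) hρ hρ_mono μ)
    (equicontinuous_infConv (fun M => empP) g
      (fun M => (isBounded_iff_forall_norm_le.2 ⟨_, forall_mem_range.2 (hg M)⟩).bddBelow)
      (by fun_prop) hρ)
  refine ⟨φ, hφ, F, hF, ?_⟩
  convert tendsto_iSup_abs_sub_of_tendstoUniformly hu (fun ℓ => empP (M := φ ℓ)) using 4 with ℓ x
  rw [infConv_apply_self (hg_mod _) (by simp [ρ, hzero])]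

theorem mean_field_limit_of_bounded_rkhs_sequences
    {X : Type*} [MetricSpace X] [CompactSpace X] [MeasurableSpace X] [BorelSpace X]
    (H : ℕ → Type*) [∀ M, NormedAddCommGroup (H M)] [∀ M, InnerProductSpace ℝ (H M)]
    (k : ∀ M : ℕ, (Fin (M + 1) → X) → (Fin (M + 1) → X) → ℝ)
    (K : ∀ M : ℕ, (Fin (M + 1) → X) → H M)
    (hrepr : ∀ (M : ℕ) (x x' : Fin (M + 1) → X), k M x x' = (inner ℝ (K M x') (K M x) : ℝ))
    (hperm : ∀ (M : ℕ) (σ : Equiv.Perm (Fin (M + 1))) (x x' : Fin (M + 1) → X),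
      k M (x ∘ σ) x' = k M x x')
    (Ck : ℝ) (hbdd : ∀ (M : ℕ) (x x' : Fin (M + 1) → X), |k M x x'| ≤ Ck)
    (ω : ℝ → ℝ) (hcont : Continuous ω) (hmono : Monotone ω) (hzero : ω 0 = 0)
    (hucont : ∀ (M : ℕ) (x₁ x₂ x₁' x₂' : Fin (M + 1) → X),
      |k M x₁ x₁' - k M x₂ x₂'| ≤ ω (dKR (emp x₁) (emp x₂) + dKR (emp x₁') (emp x₂')))
    (f : ∀ M, H M) (B : ℝ) (hB : ∀ M, ‖f M‖ ≤ B) :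
    ∃ φ : ℕ → ℕ, StrictMono φ ∧
      ∃ F : ProbabilityMeasure X → ℝ, Continuous F ∧
        Filter.Tendsto (fun ℓ => ⨆ x : Fin (φ ℓ + 1) → X,
          |(inner ℝ (f (φ ℓ)) (K (φ ℓ) x) : ℝ) - F (empP x)|) Filter.atTop (nhds 0) :=
  mean_field_limit_of_bounded_rkhs_sequences_general H k K hrepr Ck hbdd ω hcont hmono hzero hucont
    f B hB
end

section
/- Uniform continuity of double-sum kernels w.r.t. the KME distance: if k₀ is a kernel on X bounded by C, then for all M and x₁, x₁′, x₂, x₂′ ∈ X^M, |k^{[M]}(x₁,x₁′) − k^{[M]}(x₂,x₂′)| ≤ √C · ( ‖f_{μ̂[x₁]} − f_{μ̂[x₂]}‖_{H₀} + ‖f_{μ̂[x₁′]} − f_{μ̂[x₂′]}‖_{H₀} ), where k^{[M]} is the double-sum kernel and f_μ the kernel mean embedding. -/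
/-- The double-sum kernel on `X^M` built from a base kernel `k₀` on `X`. -/
noncomputable def doubleSum {X : Type*} (k₀ : X → X → ℝ) (M : ℕ)
    (x x' : Fin M → X) : ℝ :=
  (1 / (M : ℝ) ^ 2) * ∑ m, ∑ m', k₀ (x m) (x' m')

/-!
With `μ x = M⁻¹ • ∑ m, Φ (x m)` the kernel mean embedding `f_{μ̂[x]}`, the double-sum kernel
is the inner product `⟪μ x', μ x⟫`. Every feature vector has norm `√(k₀ x x) ≤ √C`, hence so does
every mean embedding, and the inner product is Lipschitz on the ball of radius `√C`:
`⟪a', a⟫ - ⟪b', b⟫ = ⟪a', a - b⟫ + ⟪a' - b', b⟫`.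
-/

open Finset

noncomputable section

variable {X H : Type*} [NormedAddCommGroup H] [InnerProductSpace ℝ H]

def meanEmbedding (Φ : X → H) {M : ℕ} (x : Fin M → X) : H :=
  (M : ℝ)⁻¹ • ∑ m, Φ (x m)

theorem doubleSum_eq_inner_meanEmbedding {k₀ : X → X → ℝ} {Φ : X → H}
    (hfeat : ∀ x x' : X, k₀ x x' = inner ℝ (Φ x') (Φ x)) {M : ℕ} (x x' : Fin M → X) :
    doubleSum k₀ M x x' = inner ℝ (meanEmbedding Φ x') (meanEmbedding Φ x) := by
  simp only [meanEmbedding, real_inner_smul_left, real_inner_smul_right, sum_inner, inner_sum,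
    ← hfeat, ← mul_sum, doubleSum]
  rw [sum_comm]
  ring

theorem norm_meanEmbedding_le {Φ : X → H} {R : ℝ} (hR : 0 ≤ R) (hΦ : ∀ x, ‖Φ x‖ ≤ R)
    {M : ℕ} (x : Fin M → X) : ‖meanEmbedding Φ x‖ ≤ R := by
  have hsum : ‖∑ m, Φ (x m)‖ ≤ M * R := by
    simpa using norm_sum_le_of_le univ fun m _ => hΦ (x m)
  calc ‖meanEmbedding Φ x‖ = (M : ℝ)⁻¹ * ‖∑ m, Φ (x m)‖ := by
        rw [meanEmbedding, norm_smul, norm_inv, Real.norm_natCast]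
    _ ≤ (M : ℝ)⁻¹ * (M * R) := by gcongr
    _ = ((M : ℝ)⁻¹ * M) * R := by ring
    _ ≤ R := mul_le_of_le_one_left hR inv_mul_le_one

theorem norm_feature_le_sqrt {k₀ : X → X → ℝ} {Φ : X → H}
    (hfeat : ∀ x x' : X, k₀ x x' = inner ℝ (Φ x') (Φ x)) {C : ℝ}
    (hbdd : ∀ x x', |k₀ x x'| ≤ C) (x : X) : ‖Φ x‖ ≤ Real.sqrt C := by
  have hsq : ‖Φ x‖ ^ 2 ≤ C := by
    rw [← real_inner_self_eq_norm_sq, ← hfeat]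
    exact (le_abs_self _).trans (hbdd x x)
  simpa [Real.sqrt_sq (norm_nonneg _)] using Real.sqrt_le_sqrt hsq

theorem abs_inner_sub_inner_le {a a' b b' : H} {R : ℝ} (ha' : ‖a'‖ ≤ R) (hb : ‖b‖ ≤ R) :
    |inner ℝ a' a - inner ℝ b' b| ≤ R * (‖a - b‖ + ‖a' - b'‖) := by
  have hsplit : inner ℝ a' a - inner ℝ b' b = inner ℝ a' (a - b) + inner ℝ (a' - b') b := by
    rw [inner_sub_right, inner_sub_left]
    ring
  calc |inner ℝ a' a - inner ℝ b' b|
      ≤ |inner ℝ a' (a - b)| + |inner ℝ (a' - b') b| := hsplit ▸ abs_add_le _ _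
    _ ≤ ‖a'‖ * ‖a - b‖ + ‖a' - b'‖ * ‖b‖ :=
        add_le_add (abs_real_inner_le_norm _ _) (abs_real_inner_le_norm _ _)
    _ ≤ R * ‖a - b‖ + ‖a' - b'‖ * R := by gcongr
    _ = R * (‖a - b‖ + ‖a' - b'‖) := by ring

end

theorem double_sum_kernel_uniform_continuity_kme
    {X : Type*} {H : Type*} [NormedAddCommGroup H] [InnerProductSpace ℝ H]
    (k₀ : X → X → ℝ) (Φ : X → H) (C : ℝ)
    (hfeat : ∀ x x' : X, k₀ x x' = (inner ℝ (Φ x') (Φ x) : ℝ))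
    (hbdd : ∀ x x', |k₀ x x'| ≤ C) :
    ∀ (M : ℕ) (x₁ x₁' x₂ x₂' : Fin M → X),
      |doubleSum k₀ M x₁ x₁' - doubleSum k₀ M x₂ x₂'| ≤
        Real.sqrt C *
          (‖(M : ℝ)⁻¹ • ∑ m, Φ (x₁ m) - (M : ℝ)⁻¹ • ∑ m, Φ (x₂ m)‖ +
           ‖(M : ℝ)⁻¹ • ∑ m, Φ (x₁' m) - (M : ℝ)⁻¹ • ∑ m, Φ (x₂' m)‖) := by
  intro M x₁ x₁' x₂ x₂'
  have hmean (x : Fin M → X) : ‖meanEmbedding Φ x‖ ≤ Real.sqrt C :=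
    norm_meanEmbedding_le (Real.sqrt_nonneg C) (norm_feature_le_sqrt hfeat hbdd) x
  rw [doubleSum_eq_inner_meanEmbedding hfeat, doubleSum_eq_inner_meanEmbedding hfeat]
  exact abs_inner_sub_inner_le (hmean x₁') (hmean x₂)
end
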